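/- Let x_1, …, x_m be pairwise distinct real numbers and let A be an invertible real m×m matrix defining polynomials p_j(x) = ∑_{i=1}^m A_{j,i} x^{i-1}. Suppose the vectors p⃗_j := (p_j(x_1),…,p_j(x_m)) are pairwise orthogonal: ∑_{i=1}^m p_j(x_i) p_k(x_i) = 0 whenever j ≠ k. Then the vector a := ∑_{i=1}^m (A_{i,1} / ⟨p⃗_i, p⃗_i⟩) · p⃗_i (each ⟨p⃗_i,p⃗_i⟩ = ∑_s p_i(x_s)² is nonzero since A is invertible and the x_s are distinct) solves the Vandermonde system ∑_{l=1}^m a_l · x_l^{i-1} = δ_{i,1} for all i ∈ {1,…,m}. -/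
import Mathlib

open Matrix


/-- If `A` is an invertible real `m × m` matrix whose rows define polynomials
`p j x = ∑ i, A j i * x ^ i` whose value vectors on distinct points `x` are pairwise
orthogonal, then `a = ∑ i, (A i ⟨0, hm⟩ / ⟨p⃗ i, p⃗ i⟩) • p⃗ i` solves the Vandermonde system
`∑ l, a l * (x l) ^ (i - 1) = δ_{i,1}` (indexed from `0`). -/
theorem orthogonal_polynomial_vandermonde_solution {m : ℕ} (hm : 0 < m)
    (x : Fin m → ℝ) (hx : Function.Injective x)
    (A : Matrix (Fin m) (Fin m) ℝ) (hA : IsUnit A.det)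
    (p : Fin m → ℝ → ℝ)
    (hp : ∀ j t, p j t = ∑ i, A j i * t ^ (i : ℕ))
    (horth : ∀ j k : Fin m, j ≠ k → ∑ i, p j (x i) * p k (x i) = 0)
    (a : Fin m → ℝ)
    (ha : ∀ l, a l = ∑ i, (A i ⟨0, hm⟩ / ∑ s, (p i (x s)) ^ 2) * p i (x l)) :
    ∀ i : Fin m, ∑ l, a l * (x l) ^ (i : ℕ) = if (i : ℕ) = 0 then 1 else 0 := by
  intro i
  set i0 : Fin m := ⟨0, hm⟩ with hi0
  set V : Matrix (Fin m) (Fin m) ℝ := Matrix.vandermonde x with hV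
  set B : Matrix (Fin m) (Fin m) ℝ := V * Aᵀ with hB
  have hBapp : ∀ l j, B l j = p j (x l) := by
    intro l j
    rw [hB, Matrix.mul_apply, hp]
    refine Finset.sum_congr rfl fun k _ => ?_
    simp [hV, Matrix.vandermonde, mul_comm]
  set d : Fin m → ℝ := fun j => ∑ s, (p j (x s)) ^ 2 with hd
  have hBtB : Bᵀ * B = Matrix.diagonal d := by
    ext j k
    rw [Matrix.mul_apply]
    by_cases h : j = k
    · subst h
      simp [hBapp, hd, sq, Matrix.diagonal]
    · simp only [Matrix.transpose_apply, hBapp, Matrix.diagonal, Matrix.of_apply]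
      rw [if_neg h]
      exact horth j k h
  have hVdet : IsUnit V.det := by
    rw [hV, Matrix.det_vandermonde, isUnit_iff_ne_zero]
    rw [Finset.prod_ne_zero_iff]
    intro j _
    rw [Finset.prod_ne_zero_iff]
    intro k hk
    rw [Finset.mem_Ioi] at hk
    exact sub_ne_zero.mpr fun hxx => (ne_of_gt hk) (hx hxx)
  have hBdet : IsUnit B.det := by
    rw [hB, Matrix.det_mul, Matrix.det_transpose]
    exact hVdet.mul hA
  have hdne : ∀ j, d j ≠ 0 := by
    have : IsUnit (Matrix.diagonal d).det := by
      rw [← hBtB, Matrix.det_mul, Matrix.det_transpose]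
      exact hBdet.mul hBdet
    rw [Matrix.det_diagonal, isUnit_iff_ne_zero, Finset.prod_ne_zero_iff] at this
    exact fun j => this j (Finset.mem_univ j)
  set D : Matrix (Fin m) (Fin m) ℝ := Matrix.diagonal (fun j => (d j)⁻¹) with hD
  have hDd : Matrix.diagonal d * D = 1 := by
    rw [hD, Matrix.diagonal_mul_diagonal]
    have : (fun j => d j * (d j)⁻¹) = fun _ => (1 : ℝ) := by
      funext j; exact mul_inv_cancel₀ (hdne j)
    rw [this, Matrix.diagonal_one]
  have hleft : A * (Vᵀ * B * D) = 1 := by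
    have h1 : A * (Vᵀ * B * D) = (A * Vᵀ) * B * D := by
      simp only [Matrix.mul_assoc]
    have h2 : A * Vᵀ = Bᵀ := by
      rw [hB, Matrix.transpose_mul, Matrix.transpose_transpose]
    rw [h1, h2, hBtB, hDd]
  have hright : Vᵀ * B * D * A = 1 := by
    have := Matrix.inv_eq_right_inv hleft
    rw [← this]
    exact Matrix.nonsing_inv_mul A hA
  have haBD : ∀ l, a l = (B * (D * A)) l i0 := by
    intro l
    rw [ha, Matrix.mul_apply]
    refine Finset.sum_congr rfl fun j _ => ?_
    rw [hD, Matrix.diagonal_mul, hBapp, div_eq_mul_inv]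
    ring
  have key : (Vᵀ * B * D * A) i i0 = ∑ l, a l * (x l) ^ (i : ℕ) := by
    rw [Matrix.mul_assoc, Matrix.mul_assoc, Matrix.mul_apply]
    refine Finset.sum_congr rfl fun l _ => ?_
    rw [← haBD l, Matrix.transpose_apply, hV, Matrix.vandermonde_apply]
    ring
  rw [← key, hright]
  by_cases h : (i : ℕ) = 0
  · have : i = i0 := Fin.ext h
    rw [this, if_pos rfl]
    simp [Matrix.one_apply]
  · rw [if_neg h]
    have : i ≠ i0 := fun hc => h (by rw [hc])
    simp [Matrix.one_apply, this]
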